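/- arXiv:2009.09142 — 2 statements merged into one kernel-verified Lean document; each statement's English description precedes it below -/
import Mathlib

section
/- Let Λ ∈ ℂ^{n×n} be Hermitian positive semidefinite and U ∈ ℂ^{n×r} with U^H U = I_r. For every i = 1,…,n, the i-th largest eigenvalue satisfies λ_i( Λ^{1/2} U (I + U^H Λ U)^{-1} U^H Λ^{1/2} ) ≤ λ_i( Λ (I + Λ)^{-1} ). -/
open Matrix
open scoped ComplexOrder

/-- The `i`-th largest eigenvalue of a Hermitian matrix (`0` if the matrix is not Hermitian):
the eigenvalues are sorted in increasing order and read off from the end. -/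
noncomputable def sortedEigenvalue {n : ℕ} (A : Matrix (Fin n) (Fin n) ℂ) (i : Fin n) : ℝ :=
  if hA : A.IsHermitian then
    ((Finset.univ.val.map hA.eigenvalues).sort (· ≤ ·)).getD (n - 1 - (i : ℕ)) 0
  else 0

/-- The square root of a positive semidefinite matrix, as defined in the older Mathlib
(removed since): `U * diagonal (√ eigenvalues) * Uᴴ` with `U` the eigenvector unitary. -/
noncomputable def Matrix.PosSemidef.sqrt {n : Type*} [Fintype n] [DecidableEq n] {𝕜 : Type*}
    [RCLike 𝕜] {A : Matrix n n 𝕜} (hA : A.PosSemidef) : Matrix n n 𝕜 :=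
  hA.1.eigenvectorUnitary.1 * diagonal ((↑) ∘ (√·) ∘ hA.1.eigenvalues) *
    (star hA.1.eigenvectorUnitary : Matrix n n 𝕜)

/-!
Write `A = 1 + Λ` and `S = Λ^{1/2}`. Since `Uᴴ U = 1`, the middle factor is `(Uᴴ A U)⁻¹`, and
`U (Uᴴ A U)⁻¹ Uᴴ ≤ A⁻¹` in the Loewner order: by the Schur complement criterion, applied to either
diagonal block, this is equivalent to the positivity of `[[A⁻¹, U], [Uᴴ, Uᴴ A U]]`, whose other
Schur complement `Uᴴ A U - Uᴴ A U` vanishes. Conjugating by `S`, which commutes with `A`, gives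
`S U (Uᴴ A U)⁻¹ Uᴴ S ≤ S A⁻¹ S = Λ A⁻¹`. Finally, sorted eigenvalues are monotone in the Loewner
order (Weyl): for `P ≤ Q` a dimension count gives a nonzero `x` in the span of the top `i + 1`
eigenvectors of `P` and of the bottom `n - i` eigenvectors of `Q`, and then
`λ_i(P) ‖x‖² ≤ ⟪P x, x⟫ ≤ ⟪Q x, x⟫ ≤ λ_i(Q) ‖x‖²`.
-/

open Module
open scoped InnerProductSpace MatrixOrder

namespace OrthonormalBasis

variable {ι 𝕜 E : Type*} [Fintype ι] [RCLike 𝕜] [NormedAddCommGroup E] [InnerProductSpace 𝕜 E]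

theorem repr_eq_zero_of_mem_span (b : OrthonormalBasis ι 𝕜 E) {s : Set ι} {x : E}
    (hx : x ∈ Submodule.span 𝕜 (b '' s)) {k : ι} (hk : k ∉ s) : b.repr x k = 0 := by
  classical
  induction hx using Submodule.span_induction with
  | mem y hy =>
    obtain ⟨j, hj, rfl⟩ := hy
    simp [b.repr_self, ne_of_mem_of_not_mem hj hk]
  | zero => simp
  | add y z _ _ hy hz => simp [hy, hz]
  | smul c y _ hy => simp [hy]

theorem finrank_span_image (b : OrthonormalBasis ι 𝕜 E) (s : Set ι) [Fintype s] :
    finrank 𝕜 (Submodule.span 𝕜 (b '' s)) = Fintype.card s := by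
  rw [Set.image_eq_range]
  exact finrank_span_eq_card (b.orthonormal.linearIndependent.comp _ Subtype.val_injective)

end OrthonormalBasis

namespace LinearMap.IsSymmetric

variable {𝕜 E : Type*} [RCLike 𝕜] [NormedAddCommGroup E] [InnerProductSpace 𝕜 E]
  [FiniteDimensional 𝕜 E] {n : ℕ} {T : E →ₗ[𝕜] E}

theorem re_inner_apply_self_eq_sum (hT : T.IsSymmetric) (hn : finrank 𝕜 E = n) (x : E) :
    RCLike.re ⟪T x, x⟫_𝕜 =
      ∑ k, hT.eigenvalues hn k * ‖(hT.eigenvectorBasis hn).repr x k‖ ^ 2 := by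
  rw [← (hT.eigenvectorBasis hn).repr.inner_map_map, PiLp.inner_apply, map_sum]
  refine Finset.sum_congr rfl fun k _ => ?_
  rw [hT.eigenvectorBasis_apply_self_apply, ← smul_eq_mul, inner_smul_left,
    inner_self_eq_norm_sq_to_K]
  simp

theorem eigenvalue_mul_norm_sq_le_re_inner (hT : T.IsSymmetric) (hn : finrank 𝕜 E = n)
    {i : Fin n} {x : E} (hx : x ∈ Submodule.span 𝕜 (hT.eigenvectorBasis hn '' Set.Iic i)) :
    hT.eigenvalues hn i * ‖x‖ ^ 2 ≤ RCLike.re ⟪T x, x⟫_𝕜 := by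
  rw [re_inner_apply_self_eq_sum, ← (hT.eigenvectorBasis hn).repr.norm_map,
    EuclideanSpace.norm_sq_eq, Finset.mul_sum]
  refine Finset.sum_le_sum fun k _ => ?_
  by_cases hk : k ≤ i
  · gcongr
    exact hT.eigenvalues_antitone hn hk
  · simp [(hT.eigenvectorBasis hn).repr_eq_zero_of_mem_span hx hk]

theorem re_inner_le_eigenvalue_mul_norm_sq (hT : T.IsSymmetric) (hn : finrank 𝕜 E = n)
    {i : Fin n} {x : E} (hx : x ∈ Submodule.span 𝕜 (hT.eigenvectorBasis hn '' Set.Ici i)) :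
    RCLike.re ⟪T x, x⟫_𝕜 ≤ hT.eigenvalues hn i * ‖x‖ ^ 2 := by
  rw [re_inner_apply_self_eq_sum, ← (hT.eigenvectorBasis hn).repr.norm_map,
    EuclideanSpace.norm_sq_eq, Finset.mul_sum]
  refine Finset.sum_le_sum fun k _ => ?_
  by_cases hk : i ≤ k
  · gcongr
    exact hT.eigenvalues_antitone hn hk
  · simp [(hT.eigenvectorBasis hn).repr_eq_zero_of_mem_span hx hk]

theorem eigenvalues_le_of_le {S : E →ₗ[𝕜] E} (hS : S.IsSymmetric) (hT : T.IsSymmetric)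
    (hST : S ≤ T) (hn : finrank 𝕜 E = n) (i : Fin n) :
    hS.eigenvalues hn i ≤ hT.eigenvalues hn i := by
  obtain ⟨x, hxS, hxT, hx⟩ : ∃ x ∈ Submodule.span 𝕜 (hS.eigenvectorBasis hn '' Set.Iic i),
      x ∈ Submodule.span 𝕜 (hT.eigenvectorBasis hn '' Set.Ici i) ∧ x ≠ 0 := by
    by_contra! h
    have := Submodule.finrank_add_finrank_le_of_disjoint (Submodule.disjoint_def.mpr h)
    rw [OrthonormalBasis.finrank_span_image, OrthonormalBasis.finrank_span_image, hn,
      Fintype.card_Iic, Fintype.card_Ici, Fin.card_Iic, Fin.card_Ici] at this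
    omega
  have hST_x : RCLike.re ⟪S x, x⟫_𝕜 ≤ RCLike.re ⟪T x, x⟫_𝕜 := by
    simpa [inner_sub_left] using hST.2 x
  refine le_of_mul_le_mul_right ?_ (by positivity : 0 < ‖x‖ ^ 2)
  exact (hS.eigenvalue_mul_norm_sq_le_re_inner hn hxS).trans <|
    hST_x.trans (hT.re_inner_le_eigenvalue_mul_norm_sq hn hxT)

end LinearMap.IsSymmetric

theorem Matrix.charpoly_toEuclideanLin {ι 𝕜 : Type*} [Fintype ι] [DecidableEq ι] [RCLike 𝕜]
    (A : Matrix ι ι 𝕜) : (toEuclideanLin A).charpoly = A.charpoly :=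
  charpoly_toLin A (EuclideanSpace.basisFun ι 𝕜).toBasis

theorem sortedEigenvalue_eq_eigenvalues {n : ℕ} {A : Matrix (Fin n) (Fin n) ℂ}
    (hA : A.IsHermitian) (i : Fin n) :
    sortedEigenvalue A i =
      (isSymmetric_toEuclideanLin_iff.mpr hA).eigenvalues finrank_euclideanSpace_fin i := by
  set hT := isSymmetric_toEuclideanLin_iff.mpr hA
  have hsort : (Finset.univ.val.map hA.eigenvalues).sort (· ≤ ·) =
      (List.ofFn (hT.eigenvalues finrank_euclideanSpace_fin)).reverse := by
    refine List.Perm.eq_reverse_of_sortedLE_of_sortedGE ?_ (Multiset.pairwise_sort _ _).sortedLE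
      (hT.eigenvalues_antitone _).sortedGE_ofFn
    rw [← hT.sort_roots_charpoly_eq_eigenvalues, charpoly_toEuclideanLin,
      hA.roots_charpoly_eq_eigenvalues, Multiset.map_map]
    simp only [Function.comp_def, RCLike.ofReal_re]
    exact Multiset.coe_eq_coe.mp ((Multiset.sort_eq _ _).trans (Multiset.sort_eq _ _).symm)
  have hlt : n - 1 - (i : ℕ) <
      (List.ofFn (hT.eigenvalues finrank_euclideanSpace_fin)).reverse.length := by
    simp only [List.length_reverse, List.length_ofFn]
    omega
  rw [sortedEigenvalue, dif_pos hA, hsort, List.getD_eq_getElem _ _ hlt, List.getElem_reverse,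
    List.getElem_ofFn]
  congr
  simp only [List.length_ofFn]
  omega

theorem sortedEigenvalue_le_of_le {n : ℕ} {A B : Matrix (Fin n) (Fin n) ℂ} (hA : A.IsHermitian)
    (hAB : A ≤ B) (i : Fin n) : sortedEigenvalue A i ≤ sortedEigenvalue B i := by
  have hB : B.IsHermitian := by simpa using hA.add hAB.isHermitian
  rw [sortedEigenvalue_eq_eigenvalues hA, sortedEigenvalue_eq_eigenvalues hB]
  refine LinearMap.IsSymmetric.eigenvalues_le_of_le _ _ ?_ _ _
  rw [LinearMap.le_def, ← map_sub, isPositive_toEuclideanLin_iff]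
  exact hAB

theorem Matrix.PosSemidef.sqrt_eq_cfcSqrt {n 𝕜 : Type*} [Fintype n] [DecidableEq n] [RCLike 𝕜]
    {A : Matrix n n 𝕜} (hA : A.PosSemidef) : hA.sqrt = CFC.sqrt A := by
  rw [CFC.sqrt_eq_real_sqrt A hA.nonneg, cfcₙ_eq_cfc, hA.1.cfc_eq, IsHermitian.cfc,
    Unitary.conjStarAlgAut_apply]
  rfl

theorem Matrix.PosDef.mul_inv_conjTranspose_mul_mul_mul_conjTranspose_le_inv
    {m n 𝕜 : Type*} [Fintype m] [Fintype n] [DecidableEq m] [DecidableEq n] [RCLike 𝕜]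
    {A : Matrix m m 𝕜} (hA : A.PosDef) (U : Matrix m n 𝕜) : U * (Uᴴ * A * U)⁻¹ * Uᴴ ≤ A⁻¹ := by
  by_cases hG : (Uᴴ * A * U).PosDef
  · have := hA.isUnit.invertible
    have := hG.isUnit.invertible
    rw [le_iff, ← PosDef.fromBlocks₂₂ _ _ hG, PosDef.fromBlocks₁₁ _ _ hA.inv,
      inv_inv_of_invertible, sub_self]
    exact PosSemidef.zero
  · have hG0 : (Uᴴ * A * U)⁻¹ = 0 := by
      rw [(hA.posSemidef.conjTranspose_mul_mul_same U).posDef_iff_isUnit,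
        isUnit_iff_isUnit_det] at hG
      exact nonsing_inv_apply_not_isUnit _ hG
    simpa [hG0] using hA.inv.posSemidef.nonneg

/-- For `Λ ⪰ 0` and `U` with orthonormal columns, each sorted eigenvalue of
`Λ^{1/2} U (I + UᴴΛU)⁻¹ Uᴴ Λ^{1/2}` is bounded by the corresponding sorted eigenvalue
of `Λ (I + Λ)⁻¹`. -/
theorem stmt_8 (n r : ℕ) (Λ : Matrix (Fin n) (Fin n) ℂ) (hΛ : Λ.PosSemidef)
    (U : Matrix (Fin n) (Fin r) ℂ) (hU : Uᴴ * U = 1) (i : Fin n) :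
    sortedEigenvalue (hΛ.sqrt * U * (1 + Uᴴ * Λ * U)⁻¹ * Uᴴ * hΛ.sqrt) i ≤
      sortedEigenvalue (Λ * (1 + Λ)⁻¹) i := by
  rw [hΛ.sqrt_eq_cfcSqrt]
  set S := CFC.sqrt Λ
  have hS : IsSelfAdjoint S := (CFC.sqrt_nonneg Λ).isSelfAdjoint
  have hA : (1 + Λ).PosDef := PosDef.one.add_posSemidef hΛ
  have hG : 1 + Uᴴ * Λ * U = Uᴴ * (1 + Λ) * U := by
    rw [Matrix.mul_add, Matrix.add_mul, Matrix.mul_one, hU]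
  have hSA : Commute S (1 + Λ)⁻¹ := by
    have : Commute S (1 + Λ) := by
      rw [← CFC.sqrt_mul_sqrt_self Λ hΛ.nonneg]
      exact (Commute.one_right S).add_right ((Commute.refl S).mul_right (Commute.refl S))
    simpa [Matrix.coe_units_inv] using this.units_inv_right (u := hA.isUnit.unit)
  have hΛA : Λ * (1 + Λ)⁻¹ = S * (1 + Λ)⁻¹ * S := by
    rw [mul_assoc, ← hSA.eq, ← mul_assoc, CFC.sqrt_mul_sqrt_self Λ hΛ.nonneg]
  have hle : S * U * (1 + Uᴴ * Λ * U)⁻¹ * Uᴴ * S ≤ Λ * (1 + Λ)⁻¹ := by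
    rw [hΛA, hG]
    simpa only [Matrix.mul_assoc] using
      hS.conjugate_le_conjugate (hA.mul_inv_conjTranspose_mul_mul_mul_conjTranspose_le_inv U)
  have hM : (S * U * (1 + Uᴴ * Λ * U)⁻¹ * Uᴴ * S).IsHermitian := by
    have hG_pos : (1 + Uᴴ * Λ * U).PosDef :=
      PosDef.one.add_posSemidef (hΛ.conjTranspose_mul_mul_same U)
    have := (hG_pos.inv.posSemidef.mul_mul_conjTranspose_same (S * U)).isHermitian
    simpa only [conjTranspose_mul, hS.isHermitian.eq, Matrix.mul_assoc] using this
  exact sortedEigenvalue_le_of_le hM hle i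
end

section
/- For fixed σ² > 0, the function ρ ↦ R₁(ρ, σ²) = log[ ((1+σ²)² − ρ²)² / ( (1+σ²)(σ⁶+3σ⁴−2σ²ρ²+2σ²) ) ] is monotonically decreasing on [0,1] and monotonically increasing on [−1,0]; hence its maximum over ρ ∈ [−1,1] is attained at ρ = 0, where R₁(0,σ²) = log[ (1+σ²)² / (σ²(2+σ²)) ], and its minimum is attained at ρ = ±1, where R₁(±1,σ²) = log[ (2+σ²)² / (3 + 4σ² + σ⁴) ]. -/
/-- The one-beam secret key rate as a function of the cross-correlation `ρ`
(noise variance `s = σ²`). -/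
noncomputable def R1 (s ρ : ℝ) : ℝ :=
  Real.log (((1 + s) ^ 2 - ρ ^ 2) ^ 2 /
    ((1 + s) * (s ^ 3 + 3 * s ^ 2 - 2 * s * ρ ^ 2 + 2 * s)))

/-! `R1 s ρ` is the logarithm of `g (ρ²) / (s (1 + s))` with `g t = (a² - t)² / (a² + a - 2t)`
and `a = 1 + s`. Cross-multiplying, `g t ≥ g u` for `t ≤ u ≤ a` reduces to the factorisation
`(a² - t)² (a² + a - 2u) - (a² - u)² (a² + a - 2t) = (u - t) ((a² - t)(a - u) + (a² - u)(a - t))`,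
whose factors are all nonnegative. Hence `R1 s ρ` decreases in `ρ²`, which gives the monotonicity
and the extrema at `ρ = 0` and `ρ = ±1`. -/

open Set

lemma antitoneOn_sq_sub_div {a : ℝ} (ha : 1 < a) :
    AntitoneOn (fun t => (a ^ 2 - t) ^ 2 / (a ^ 2 + a - 2 * t)) (Iic a) := by
  intro t ht u hu htu
  have ht' : t ≤ a := ht
  have hu' : u ≤ a := hu
  have hpos : ∀ v ≤ a, 0 < a ^ 2 + a - 2 * v := fun v hv => by nlinarith
  dsimp only
  rw [div_le_div_iff₀ (hpos u hu') (hpos t ht')]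
  have key : (a ^ 2 - t) ^ 2 * (a ^ 2 + a - 2 * u) - (a ^ 2 - u) ^ 2 * (a ^ 2 + a - 2 * t)
      = (u - t) * ((a ^ 2 - t) * (a - u) + (a ^ 2 - u) * (a - t)) := by ring
  have hfac : 0 ≤ (u - t) * ((a ^ 2 - t) * (a - u) + (a ^ 2 - u) * (a - t)) := by
    have hsq : ∀ v ≤ a, 0 ≤ a ^ 2 - v := fun v hv => by nlinarith
    apply mul_nonneg (by linarith)
    exact add_nonneg (mul_nonneg (hsq t ht') (by linarith)) (mul_nonneg (hsq u hu') (by linarith))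
  linarith

lemma R1_eq_log_div {s : ℝ} (ρ : ℝ) :
    R1 s ρ = Real.log (((1 + s) ^ 2 - ρ ^ 2) ^ 2 / ((1 + s) ^ 2 + (1 + s) - 2 * ρ ^ 2)
      / (s * (1 + s))) := by
  rw [R1, div_div]
  congr 2
  ring

lemma R1_le_R1_of_sq_le {s : ℝ} (hs : 0 < s) {ρ ρ' : ℝ} (h : ρ ^ 2 ≤ ρ' ^ 2) (h' : ρ' ^ 2 ≤ 1) :
    R1 s ρ' ≤ R1 s ρ := by
  have hmem : ∀ {v : ℝ}, v ≤ 1 → v ∈ Iic (1 + s) := fun hv => by simp only [mem_Iic]; linarith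
  have hg : 0 < ((1 + s) ^ 2 - ρ' ^ 2) ^ 2 / ((1 + s) ^ 2 + (1 + s) - 2 * ρ' ^ 2) := by
    have hsub : 0 < (1 + s) ^ 2 - ρ' ^ 2 := by nlinarith
    exact div_pos (pow_pos hsub 2) (by linarith)
  rw [R1_eq_log_div, R1_eq_log_div]
  refine Real.log_le_log (by positivity) (div_le_div_of_nonneg_right ?_ (by positivity))
  exact antitoneOn_sq_sub_div (by linarith) (hmem (h.trans h')) (hmem h') h

/-- For fixed `σ² > 0`, `ρ ↦ R₁(ρ,σ²)` decreases on `[0,1]`, increases on `[−1,0]`;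
its maximum over `[−1,1]` is at `ρ = 0` with value `log[(1+σ²)²/(σ²(2+σ²))]` and its minimum
is at `ρ = ±1` with value `log[(2+σ²)²/(3+4σ²+σ⁴)]`. -/
theorem stmt_12 (s : ℝ) (hs : 0 < s) :
    AntitoneOn (fun ρ => R1 s ρ) (Set.Icc 0 1) ∧
    MonotoneOn (fun ρ => R1 s ρ) (Set.Icc (-1) 0) ∧
    (∀ ρ ∈ Set.Icc (-1 : ℝ) 1, R1 s ρ ≤ R1 s 0) ∧
    R1 s 0 = Real.log ((1 + s) ^ 2 / (s * (2 + s))) ∧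
    (∀ ρ ∈ Set.Icc (-1 : ℝ) 1, R1 s 1 ≤ R1 s ρ) ∧
    R1 s 1 = Real.log ((2 + s) ^ 2 / (3 + 4 * s + s ^ 2)) ∧
    R1 s (-1) = R1 s 1 := by
  have hsq_le_one : ∀ ρ ∈ Icc (-1 : ℝ) 1, ρ ^ 2 ≤ 1 := fun ρ hρ => by
    rw [sq_le_one_iff_abs_le_one]; exact abs_le.2 hρ
  refine ⟨?_, ?_, ?_, ?_, ?_, ?_, ?_⟩
  · intro a ha b hb hab
    exact R1_le_R1_of_sq_le hs (by nlinarith [ha.1]) (by nlinarith [hb.1, hb.2])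
  · intro a ha b hb hab
    exact R1_le_R1_of_sq_le hs (by nlinarith [hb.2]) (by nlinarith [ha.1, ha.2])
  · intro ρ hρ
    exact R1_le_R1_of_sq_le hs (by simpa using sq_nonneg ρ) (hsq_le_one ρ hρ)
  · rw [R1]
    congr 1
    have hden : 0 < (1 + s) * (s ^ 3 + 3 * s ^ 2 - 2 * s * 0 ^ 2 + 2 * s) := by
      nlinarith [pow_pos hs 3]
    rw [div_eq_div_iff hden.ne' (by positivity)]
    ring
  · intro ρ hρ
    exact R1_le_R1_of_sq_le hs (by simpa using hsq_le_one ρ hρ) (by norm_num)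
  · rw [R1]
    congr 1
    have hden : 0 < (1 + s) * (s ^ 3 + 3 * s ^ 2 - 2 * s * 1 ^ 2 + 2 * s) := by nlinarith
    rw [div_eq_div_iff hden.ne' (by positivity)]
    ring
  · simp only [R1, neg_sq]
end
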